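/- arXiv:0710.0021 — 3 statements merged into one kernel-verified Lean document; each statement's English description precedes it below -/
import Mathlib

section
/- Let Ω be a bounded interval of positive length. The quasicrystal Λ_τ(Ω)={a+bτ : a,b∈ℤ, a+bτ'∈Ω} is relatively dense in ℝ: there exists R>0 such that every interval of length R in ℝ contains a point of Λ_τ(Ω). -/
/-!
Multiplication by the unit `w = τ ^ (2n)` of `ℤ[τ]` acts on the conjugate coordinate as
multiplication by `w' = τ' ^ (2n) = w⁻¹`, which is smaller than `d` for large `n`. Hence
`Λ_τ([c, c + d))` contains `w • Λ_τ([wc, wc + 1))`. In a window `[c₁, c₁ + 1)` of length one,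
each `b ∈ ℤ` gives the point `a + bτ` with `a = ⌈c₁ - bτ'⌉`, which lies within `1` of `c₁ + b√5`
since `τ - τ' = √5`; so these points have gaps at most `1 + √5`, and their images under `w`
gaps at most `w (1 + √5)`.
-/

noncomputable def τ : ℝ := (1 + Real.sqrt 5) / 2
noncomputable def τ' : ℝ := (1 - Real.sqrt 5) / 2

noncomputable def Λ (Ω : Set ℝ) : Set ℝ :=
  {x : ℝ | ∃ a b : ℤ, x = a + b * τ ∧ ((a : ℝ) + b * τ') ∈ Ω}

open Real Set

lemma τ_eq_goldenRatio : τ = goldenRatio := rfl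

lemma τ'_eq_goldenConj : τ' = goldenConj := rfl

/-- The image of `ℤ[τ]` under `x ↦ (x, x')`, where `'` is the Galois conjugation `τ ↦ τ'`. -/
noncomputable def goldenLattice : Subring (ℝ × ℝ) where
  carrier := {v | ∃ a b : ℤ, v = (a + b * τ, a + b * τ')}
  mul_mem' := by
    rintro _ _ ⟨a, b, rfl⟩ ⟨a', b', rfl⟩
    refine ⟨a * a' + b * b', a * b' + a' * b + b * b', ?_⟩
    have hτ : τ ^ 2 = τ + 1 := goldenRatio_sq
    have hτ' : τ' ^ 2 = τ' + 1 := goldenConj_sq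
    ext
    · simp only [Prod.fst_mul]; push_cast; linear_combination (b * b' : ℝ) * hτ
    · simp only [Prod.snd_mul]; push_cast; linear_combination (b * b' : ℝ) * hτ'
  one_mem' := ⟨1, 0, by ext <;> simp⟩
  add_mem' := by
    rintro _ _ ⟨a, b, rfl⟩ ⟨a', b', rfl⟩
    exact ⟨a + a', b + b', by ext <;> simp only [Prod.fst_add, Prod.snd_add] <;> push_cast <;> ring⟩
  zero_mem' := ⟨0, 0, by ext <;> simp⟩
  neg_mem' := by
    rintro _ ⟨a, b, rfl⟩
    exact ⟨-a, -b, by ext <;> simp only [Prod.fst_neg, Prod.snd_neg] <;> push_cast <;> ring⟩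

lemma mem_Λ_iff {Ω : Set ℝ} {x : ℝ} : x ∈ Λ Ω ↔ ∃ y ∈ Ω, (x, y) ∈ goldenLattice := by
  constructor
  · rintro ⟨a, b, rfl, hΩ⟩
    exact ⟨_, hΩ, a, b, rfl⟩
  · rintro ⟨y, hy, a, b, hab⟩
    simp only [Prod.mk.injEq] at hab
    exact ⟨a, b, hab.1, hab.2 ▸ hy⟩

lemma Λ_mono {Ω Ω' : Set ℝ} (h : Ω ⊆ Ω') : Λ Ω ⊆ Λ Ω' :=
  fun _ ⟨a, b, hx, hΩ⟩ ↦ ⟨a, b, hx, h hΩ⟩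

lemma pow_mem_goldenLattice (n : ℕ) : (τ ^ n, τ' ^ n) ∈ goldenLattice :=
  Prod.pow_mk τ τ' n ▸ pow_mem (⟨0, 1, by simp⟩ : (τ, τ') ∈ goldenLattice) n

lemma mul_mem_Λ {Ω : Set ℝ} {w w' x : ℝ} (hw : (w, w') ∈ goldenLattice) (hx : x ∈ Λ Ω) :
    w * x ∈ Λ ((w' * ·) '' Ω) := by
  obtain ⟨y, hy, hxy⟩ := mem_Λ_iff.1 hx
  exact mem_Λ_iff.2 ⟨w' * y, mem_image_of_mem _ hy, goldenLattice.mul_mem hw hxy⟩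

lemma exists_mem_goldenLattice_conj_lt {d : ℝ} (hd : 0 < d) :
    ∃ w w' : ℝ, (w, w') ∈ goldenLattice ∧ 0 < w' ∧ w' < d ∧ w * w' = 1 := by
  have hψ_sq : goldenConj ^ 2 < 1 := by
    nlinarith [goldenConj_neg, neg_one_lt_goldenConj]
  obtain ⟨n, hn⟩ := exists_pow_lt_of_lt_one hd hψ_sq
  refine ⟨τ ^ (2 * n), τ' ^ (2 * n), pow_mem_goldenLattice _, ?_, ?_, ?_⟩
  · exact (even_two_mul n).pow_pos goldenConj_ne_zero
  · rwa [pow_mul]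
  · rw [← mul_pow, pow_mul, τ_eq_goldenRatio, τ'_eq_goldenConj, goldenRatio_mul_goldenConj]
    norm_num

lemma exists_mem_Λ_Ico_one (c t : ℝ) : ∃ x ∈ Λ (Ico c (c + 1)), x ∈ Icc t (t + 1 + √5) := by
  have h5 : (0 : ℝ) < √5 := by positivity
  set b := ⌈(t - c) / √5⌉
  set a := ⌈c - b * τ'⌉
  have hτ : τ = τ' + √5 := by rw [τ_eq_goldenRatio, τ'_eq_goldenConj]; ring
  have hb₁ : t - c ≤ b * √5 := (div_le_iff₀ h5).1 (Int.le_ceil _)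
  have hb₂ : b * √5 < t - c + √5 := by
    have := (mul_lt_mul_iff_left₀ h5).2 (Int.ceil_lt_add_one ((t - c) / √5))
    rwa [add_mul, div_mul_cancel₀ _ h5.ne', one_mul] at this
  have ha₁ : c - b * τ' ≤ a := Int.le_ceil _
  have ha₂ : (a : ℝ) < c - b * τ' + 1 := Int.ceil_lt_add_one _
  refine ⟨a + b * τ, ⟨a, b, rfl, by constructor <;> linarith⟩, ?_, ?_⟩ <;> rw [hτ] <;> linarith

/-- For `Ω` a bounded interval of positive length, `Λ_τ(Ω)` is relatively
dense in `ℝ`: every interval of length `R` contains a point of it. -/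
theorem quasicrystal_relatively_dense (c d : ℝ) (hd : 0 < d) :
    ∃ R > 0, ∀ t : ℝ, ∃ x ∈ Λ (Set.Ico c (c + d)), x ∈ Set.Icc t (t + R) := by
  obtain ⟨w, w', hw, hw'_pos, hw'_lt, hww'⟩ := exists_mem_goldenLattice_conj_lt hd
  have hw_pos : 0 < w := pos_of_mul_pos_left (hww'.symm ▸ one_pos) hw'_pos.le
  refine ⟨w * (1 + √5), by positivity, fun t ↦ ?_⟩
  obtain ⟨x, hxΛ, hx_lo, hx_hi⟩ := exists_mem_Λ_Ico_one (w * c) (t / w)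
  have hwindow : (w' * ·) '' Ico (w * c) (w * c + 1) ⊆ Ico c (c + d) := by
    rw [image_mul_left_Ico hw'_pos, mul_add, ← mul_assoc, mul_comm w', hww', one_mul, mul_one]
    exact Ico_subset_Ico_right (by linarith)
  refine ⟨w * x, Λ_mono hwindow (mul_mem_Λ hw hxΛ), ?_, ?_⟩
  · calc t = w * (t / w) := (mul_div_cancel₀ t hw_pos.ne').symm
      _ ≤ w * x := by gcongr
  · calc w * x ≤ w * (t / w + 1 + √5) := by gcongr
      _ = t + w * (1 + √5) := by field_simp; ring
end

section
/- For any bounded interval Ω with nonempty interior, the quasicrystal Λ_τ(Ω) is aperiodic: there is no nonzero real t with t+Λ_τ(Ω)=Λ_τ(Ω). -/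
/-!
If `t + Λ = Λ` and `x ∈ Λ`, then `t = (x + t) - x` lies in `ℤ[τ]`, and every `x + n t` lies in `Λ`.
Passing to the Galois conjugates `⋆ : a + bτ ↦ a + bτ'`, which is well defined because `τ` is
irrational, the points `x⋆ + n t⋆` all lie in the bounded window `Ω`, so `t⋆ = 0`; since `τ'` is
irrational too, `t = 0`. That `Λ` is nonempty at all comes from the density of `ℤ + ℤτ'`.
-/

open Function Set Bornology

theorem add_nsmul_mem_of_image_add_subset {M : Type*} [AddCommMonoid M] {S : Set M} {t x : M}
    (hS : (t + ·) '' S ⊆ S) (hx : x ∈ S) (n : ℕ) : x + n • t ∈ S := by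
  induction n with
  | zero => simpa using hx
  | succ n ih =>
    have : x + (n + 1) • t = t + (x + n • t) := by rw [succ_nsmul]; abel
    exact this ▸ hS (mem_image_of_mem _ ih)

theorem eq_zero_of_forall_add_nsmul_mem {E : Type*} [NormedAddCommGroup E] [NormedSpace ℝ E]
    {W : Set E} (hW : IsBounded W) {x y : E} (h : ∀ n : ℕ, x + n • y ∈ W) : y = 0 := by
  obtain ⟨r, hr⟩ := hW.subset_closedBall x
  have hbound (n : ℕ) : n * ‖y‖ ≤ r := by simpa [RCLike.norm_nsmul ℝ] using hr (h n)
  by_contra hy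
  obtain ⟨n, hn⟩ := exists_nat_gt (r / ‖y‖)
  rw [div_lt_iff₀ (norm_pos_iff.2 hy)] at hn
  exact (hbound n).not_gt hn

def modelSet {G H E : Type*} [AddZeroClass G] [AddZeroClass H] [AddZeroClass E]
    (f : G →+ H) (g : G →+ E) (W : Set E) : Set H :=
  f '' (g ⁻¹' W)

theorem modelSet_nonempty {G H E : Type*} [AddZeroClass G] [AddZeroClass H] [AddZeroClass E]
    [TopologicalSpace E] {f : G →+ H} {g : G →+ E} (hg : DenseRange g) {W : Set E}
    (hW : (interior W).Nonempty) : (modelSet f g W).Nonempty :=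
  let ⟨v, hv⟩ := hg.exists_mem_open isOpen_interior hW
  ⟨f v, v, interior_subset (s := W) hv, rfl⟩

theorem eq_zero_of_image_add_modelSet_subset {G H E : Type*} [AddCommGroup G] [AddCommGroup H]
    [NormedAddCommGroup E] [NormedSpace ℝ E] {f : G →+ H} {g : G →+ E} (hf : Injective f)
    (hg : Injective g) {W : Set E} (hW : IsBounded W) (hne : (modelSet f g W).Nonempty)
    {t : H} (ht : (t + ·) '' modelSet f g W ⊆ modelSet f g W) : t = 0 := by
  obtain ⟨_, v, hv, rfl⟩ := hne
  obtain ⟨w, -, hw⟩ := ht (mem_image_of_mem _ ⟨v, hv, rfl⟩)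
  have ht_eq : t = f (w - v) := by rw [map_sub, hw]; abel
  have hmem (n : ℕ) : g v + n • g (w - v) ∈ W := by
    have := add_nsmul_mem_of_image_add_subset ht ⟨v, hv, rfl⟩ n
    rwa [ht_eq, ← map_nsmul, ← map_add, modelSet, hf.mem_set_image, mem_preimage, map_add,
      map_nsmul] at this
  rw [ht_eq, (injective_iff_map_eq_zero g).1 hg _ (eq_zero_of_forall_add_nsmul_mem hW hmem),
    map_zero]

def intAddMulHom (α : ℝ) : ℤ × ℤ →+ ℝ where
  toFun v := v.1 + v.2 * α
  map_zero' := by simp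
  map_add' v w := by simp only [Prod.fst_add, Prod.snd_add]; push_cast; ring

@[simp]
theorem intAddMulHom_apply (α : ℝ) (v : ℤ × ℤ) : intAddMulHom α v = v.1 + v.2 * α := rfl

theorem intAddMulHom_injective {α : ℝ} (hα : Irrational α) : Injective (intAddMulHom α) := by
  refine (injective_iff_map_eq_zero _).2 fun ⟨a, b⟩ hab => ?_
  rcases eq_or_ne b 0 with rfl | hb
  · simpa using hab
  · exact absurd hab (((hα.intCast_mul hb).intCast_add a).ne_zero)

theorem denseRange_intAddMulHom {α : ℝ} (hα : Irrational α) : DenseRange (intAddMulHom α) := by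
  have hclosure : Dense (AddSubgroup.closure {α, 1} : Set ℝ) :=
    dense_addSubgroupClosure_pair_iff.2 (by simpa using hα)
  refine hclosure.mono ?_
  rw [← AddMonoidHom.coe_range, SetLike.coe_subset_coe, AddSubgroup.closure_le, pair_subset_iff]
  exact ⟨⟨(0, 1), by simp⟩, ⟨(1, 0), by simp⟩⟩

theorem Λ_eq_modelSet (Ω : Set ℝ) : Λ Ω = modelSet (intAddMulHom τ) (intAddMulHom τ') Ω := by
  ext x
  simp [Λ, modelSet, eq_comm, and_comm]

/-- For any bounded interval `Ω` with nonempty interior, `Λ_τ(Ω)` is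
aperiodic: no nonzero real `t` satisfies `t + Λ_τ(Ω) = Λ_τ(Ω)`. -/
theorem quasicrystal_aperiodic (c d : ℝ) (hd : 0 < d) (t : ℝ) (ht : t ≠ 0) :
    (fun x => t + x) '' Λ (Set.Ico c (c + d)) ≠ Λ (Set.Ico c (c + d)) := by
  have hτ : Irrational τ := Real.goldenRatio_irrational
  have hτ' : Irrational τ' := Real.goldenConj_irrational
  have hinterior : (interior (Ico c (c + d))).Nonempty := by
    rw [interior_Ico]; exact nonempty_Ioo.2 (lt_add_of_pos_right c hd)
  intro h
  rw [Λ_eq_modelSet] at h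
  exact ht <| eq_zero_of_image_add_modelSet_subset (intAddMulHom_injective hτ)
    (intAddMulHom_injective hτ') (Metric.isBounded_Ico _ _)
    (modelSet_nonempty (denseRange_intAddMulHom hτ') hinterior) h.subset
end

section
/- Scaling invariance of the quasicrystal under multiplication by τ: for Ω a bounded interval, τ·Λ_τ(Ω) = Λ_τ(τ'·Ω), where τ'·Ω = {τ'x : x∈Ω}. -/
lemma sq5 : Real.sqrt 5 ^ 2 = 5 := Real.sq_sqrt (by norm_num)

lemma tau_sq : τ * τ = τ + 1 := by
  have h := sq5
  unfold τ
  nlinarith [h]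

lemma tau'_sq : τ' * τ' = τ' + 1 := by
  have h := sq5
  unfold τ'
  nlinarith [h]

lemma tau'_ne : τ' ≠ 0 := by
  have h := sq5
  unfold τ'
  intro hc
  have : Real.sqrt 5 = 1 := by linarith [hc, (by linarith : (1 - Real.sqrt 5) = 0)]
  rw [this] at h; norm_num at h

/-- Scaling invariance: `τ · Λ_τ(Ω) = Λ_τ(τ' · Ω)` for a bounded interval
`Ω = [c, e)`. -/
theorem quasicrystal_scaling (c e : ℝ) :
    (fun x => τ * x) '' Λ (Set.Ico c e) =
      Λ ((fun x => τ' * x) '' Set.Ico c e) := by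
  ext x
  constructor
  · rintro ⟨y, ⟨a, b, rfl, hmem⟩, rfl⟩
    refine ⟨b, a + b, ?_, (a : ℝ) + b * τ', hmem, ?_⟩
    · push_cast
      linear_combination (b : ℝ) * tau_sq
    · push_cast
      linear_combination (b : ℝ) * tau'_sq
  · rintro ⟨a, b, rfl, w, hw, hweq⟩
    refine ⟨(b - a : ℤ) + a * τ, ⟨b - a, a, rfl, ?_⟩, ?_⟩
    · have key : τ' * (((b - a : ℤ) : ℝ) + a * τ') = (a : ℝ) + b * τ' := by
        push_cast
        linear_combination (a : ℝ) * tau'_sq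
      simp only at hweq
      have : τ' * (((b - a : ℤ) : ℝ) + a * τ') = τ' * w := by rw [key, hweq]
      have := mul_left_cancel₀ tau'_ne this
      rwa [this]
    · show τ * (((b - a : ℤ) : ℝ) + a * τ) = (a : ℝ) + b * τ
      push_cast
      linear_combination (a : ℝ) * tau_sq
end
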